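/- arXiv:1105.1906 — 2 statements merged into one kernel-verified Lean document; each statement's English description precedes it below -/
import Mathlib

section
/- Let P_k denote the path on k vertices. For every k ≥ 3, the (2,1)-total labelling choosability of P_k equals 5, i.e., C_{2,1}^T(P_k) = 5 = 2·2 + 1. -/
open SimpleGraph

/-- A (p,1)-total labelling of `G`: adjacent vertices get distinct colors, edges sharing an
endpoint get distinct colors, and a vertex and an incident edge differ by at least `p`. -/
def IsPOneTotalLabelling {V : Type*} (G : SimpleGraph V) (p : ℕ)
    (cv : V → ℤ) (ce : G.edgeSet → ℤ) : Prop :=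
  (∀ u v : V, G.Adj u v → cv u ≠ cv v) ∧
  (∀ e f : G.edgeSet, e ≠ f → (∃ v : V, v ∈ (e : Sym2 V) ∧ v ∈ (f : Sym2 V)) → ce e ≠ ce f) ∧
  (∀ (v : V) (e : G.edgeSet), v ∈ (e : Sym2 V) → (p : ℤ) ≤ |cv v - ce e|)

/-- χ_{p,1}^T(G): least `k` such that `G` has a (p,1)-total labelling with colors in
`{0, …, k-1}`. -/
noncomputable def pOneTotalChromatic {V : Type*} (G : SimpleGraph V) (p : ℕ) : ℕ :=
  sInf {k : ℕ | ∃ cv ce, IsPOneTotalLabelling G p cv ce ∧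
    (∀ v : V, cv v ∈ Set.Ico (0 : ℤ) k) ∧ (∀ e : G.edgeSet, ce e ∈ Set.Ico (0 : ℤ) k)}

/-- λ_p^T(G): least `k` such that `G` has a (p,1)-total labelling with colors in `{0, …, k}`. -/
noncomputable def pOneTotalNumber {V : Type*} (G : SimpleGraph V) (p : ℕ) : ℕ :=
  sInf {k : ℕ | ∃ cv ce, IsPOneTotalLabelling G p cv ce ∧
    (∀ v : V, cv v ∈ Set.Icc (0 : ℤ) k) ∧ (∀ e : G.edgeSet, ce e ∈ Set.Icc (0 : ℤ) k)}

/-- `G` is `L`-(p,1)-total labelable for list assignment `(Lv, Le)`. -/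
def ListPOneTotalLabelable {V : Type*} (G : SimpleGraph V) (p : ℕ)
    (Lv : V → Finset ℤ) (Le : G.edgeSet → Finset ℤ) : Prop :=
  ∃ cv ce, IsPOneTotalLabelling G p cv ce ∧ (∀ v, cv v ∈ Lv v) ∧ (∀ e, ce e ∈ Le e)

/-- C_{p,1}^T(G): least `k` such that `G` is `L`-(p,1)-total labelable for every list
assignment whose lists all have size `k`. -/
noncomputable def pOneTotalChoosability {V : Type*} (G : SimpleGraph V) (p : ℕ) : ℕ :=
  sInf {k : ℕ | ∀ (Lv : V → Finset ℤ) (Le : G.edgeSet → Finset ℤ),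
    (∀ v, (Lv v).card = k) → (∀ e, (Le e).card = k) → ListPOneTotalLabelable G p Lv Le}

/-- An L(p,q)-labelling of `H`. -/
def IsLpqLabelling {V : Type*} (H : SimpleGraph V) (p q : ℕ) (f : V → ℤ) : Prop :=
  (∀ u v : V, H.Adj u v → (p : ℤ) ≤ |f u - f v|) ∧
  (∀ u v : V, H.dist u v = 2 → (q : ℤ) ≤ |f u - f v|)

/-- χ^{p,q}(H): least `k` such that `H` has an L(p,q)-labelling with colors in `{0, …, k-1}`. -/
noncomputable def LpqChromatic {V : Type*} (H : SimpleGraph V) (p q : ℕ) : ℕ :=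
  sInf {k : ℕ | ∃ f, IsLpqLabelling H p q f ∧ ∀ v : V, f v ∈ Set.Ico (0 : ℤ) k}

/-- χ_l^{p,q}(H): least `k` such that from every assignment of lists of size `k`, `H` has an
L(p,q)-labelling choosing each vertex's color from its list. -/
noncomputable def listLpqChromatic {V : Type*} (H : SimpleGraph V) (p q : ℕ) : ℕ :=
  sInf {k : ℕ | ∀ L : V → Finset ℤ, (∀ v, (L v).card = k) →
    ∃ f, IsLpqLabelling H p q f ∧ ∀ v : V, f v ∈ L v}

/-- The star `K_{1,n}`: vertex `0` is the center, adjacent to the `n` leaves. -/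
def starGraph (n : ℕ) : SimpleGraph (Fin (n + 1)) :=
  SimpleGraph.fromRel (fun v w => v = 0 ∨ w = 0)

/-- The incidence graph `S_I(G)`: replace every edge of `G` by a path of length 2. -/
def incidenceGraph {V : Type*} (G : SimpleGraph V) : SimpleGraph (V ⊕ G.edgeSet) where
  Adj x y :=
    (∃ (v : V) (e : G.edgeSet), x = Sum.inl v ∧ y = Sum.inr e ∧ v ∈ (e : Sym2 V)) ∨
    (∃ (v : V) (e : G.edgeSet), x = Sum.inr e ∧ y = Sum.inl v ∧ v ∈ (e : Sym2 V))
  symm := by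
    refine ⟨?_⟩
    rintro x y (⟨v, e, rfl, rfl, h⟩ | ⟨v, e, rfl, rfl, h⟩)
    · exact Or.inr ⟨v, e, rfl, rfl, h⟩
    · exact Or.inl ⟨v, e, rfl, rfl, h⟩
  loopless := by
    refine ⟨?_⟩
    rintro x (⟨v, e, h1, h2, -⟩ | ⟨v, e, h1, h2, -⟩) <;> subst h1 <;> simp at h2

/-- `H` is a minor of `G`: there are pairwise disjoint nonempty connected branch sets in `G`,
one for each vertex of `H`, with an edge of `G` between the branch sets of any two vertices
adjacent in `H`. -/
def IsGraphMinor {W V : Type*} (H : SimpleGraph W) (G : SimpleGraph V) : Prop :=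
  ∃ B : W → Set V,
    (∀ w, (B w).Nonempty) ∧
    (∀ w, (G.induce (B w)).Connected) ∧
    (∀ w₁ w₂, w₁ ≠ w₂ → Disjoint (B w₁) (B w₂)) ∧
    (∀ w₁ w₂, H.Adj w₁ w₂ → ∃ v₁ ∈ B w₁, ∃ v₂ ∈ B w₂, G.Adj v₁ v₂)

/-- A graph is outerplanar iff it has neither `K₄` nor `K_{2,3}` as a minor. -/
def Outerplanar {V : Type*} (G : SimpleGraph V) : Prop :=
  ¬ IsGraphMinor (completeGraph (Fin 4)) G ∧
  ¬ IsGraphMinor (completeBipartiteGraph (Fin 2) (Fin 3)) G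

/-!
Labelling `v₀, v₀v₁, v₁, v₁v₂, …` greedily along the path, each element meets at most two
previously labelled ones: one colour it must avoid and one colour it must stay `p` away from. That
forbids at most `2p` colours, so lists of size `2p + 1` suffice. Conversely, if all lists lie in
`{0, 1, 2, 3}`, the middle vertex of a path `u v w` cannot be labelled: the two edges at `v` need
distinct colours at distance at least 2 from the colour `b` of `v`, which forces `b ∈ {0, 3}` and
the edge colours `{2, 3}` resp. `{0, 1}`; the outer endpoint of the edge coloured 2 resp. 1 is then
left with `b` as its only possible colour.
-/

open Finset

theorem exists_mem_ne_and_le_abs_sub {p : ℕ} (hp : 0 < p) {s : Finset ℤ} (hs : 2 * p + 1 ≤ #s)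
    (a b : ℤ) : ∃ x ∈ s, x ≠ a ∧ (p : ℤ) ≤ |x - b| := by
  have hforbidden : #(insert a (Ioo (b - p) (b + p))) < #s :=
    calc #(insert a (Ioo (b - p) (b + p))) ≤ #(Ioo (b - p) (b + p)) + 1 := card_insert_le _ _
      _ = 2 * p := by rw [Int.card_Ioo]; omega
      _ < #s := by omega
  obtain ⟨x, hxs, hx⟩ := exists_mem_notMem_of_card_lt_card hforbidden
  simp only [mem_insert, mem_Ioo, not_or, not_and_or, not_lt] at hx
  exact ⟨x, hxs, hx.1, by rw [le_abs]; omega⟩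

theorem exists_listPOneTotalLabelling_ray {p : ℕ} (hp : 0 < p) {Lv Le : ℕ → Finset ℤ}
    (hLv : ∀ n, 2 * p + 1 ≤ #(Lv n)) (hLe : ∀ n, 2 * p + 1 ≤ #(Le n)) :
    ∃ cv ce : ℕ → ℤ, (∀ n, cv n ∈ Lv n) ∧ (∀ n, ce n ∈ Le n) ∧
      (∀ n, cv (n + 1) ≠ cv n) ∧ (∀ n, ce (n + 1) ≠ ce n) ∧
      (∀ n, (p : ℤ) ≤ |cv n - ce n|) ∧ (∀ n, (p : ℤ) ≤ |cv (n + 1) - ce n|) := by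
  choose pickV hpickV using fun n => exists_mem_ne_and_le_abs_sub hp (hLv n)
  choose pickE hpickE using fun n => exists_mem_ne_and_le_abs_sub hp (hLe n)
  -- `step n (cv (n - 1), ce (n - 1)) = (cv n, ce n)`, started from the dummy pair `(0, 0)`
  let step (n : ℕ) (x : ℤ × ℤ) : ℤ × ℤ := (pickV n x.1 x.2, pickE n x.2 (pickV n x.1 x.2))
  let q (n : ℕ) : ℤ × ℤ := Nat.rec (step 0 (0, 0)) (fun n x => step (n + 1) x) n
  have hq : ∀ n, ∃ x, q n = step n x := by rintro (_ | n) <;> exact ⟨_, rfl⟩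
  refine ⟨fun n => (q n).1, fun n => (q n).2, fun n => ?_, fun n => ?_,
    fun n => (hpickV _ _ _).2.1, fun n => (hpickE _ _ _).2.1, fun n => ?_,
    fun n => (hpickV _ _ _).2.2⟩ <;> obtain ⟨x, hx⟩ := hq n <;> simp only [hx, step]
  · exact (hpickV _ _ _).1
  · exact (hpickE _ _ _).1
  · exact abs_sub_comm (α := ℤ) _ _ ▸ (hpickE _ _ _).2.2

theorem exists_eq_mk_of_mem_edgeSet_pathGraph {k : ℕ} {e : Sym2 (Fin k)}
    (he : e ∈ (pathGraph k).edgeSet) :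
    ∃ (i : ℕ) (h : i + 1 < k), e = s(⟨i, by omega⟩, ⟨i + 1, h⟩) := by
  induction e using Sym2.ind with
  | _ u v =>
    rcases (mem_edgeSet _).1 he |> pathGraph_adj.1 with h | h
    · exact ⟨u, by omega, by congr; exact Fin.ext h.symm⟩
    · exact ⟨v, by omega, by rw [Sym2.eq_swap]; congr; exact Fin.ext h.symm⟩

theorem Sym2.inf_mk_fin_succ {k i : ℕ} (h : i + 1 < k) :
    (s(⟨i, by omega⟩, ⟨i + 1, h⟩) : Sym2 (Fin k)).inf = ⟨i, by omega⟩ :=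
  inf_of_le_left (Fin.le_def.2 (by simp))

theorem listPOneTotalLabelable_pathGraph {p k : ℕ} (hp : 0 < p) {Lv : Fin k → Finset ℤ}
    {Le : (pathGraph k).edgeSet → Finset ℤ} (hLv : ∀ v, 2 * p + 1 ≤ #(Lv v))
    (hLe : ∀ e, 2 * p + 1 ≤ #(Le e)) : ListPOneTotalLabelable (pathGraph k) p Lv Le := by
  have hpad : #(Icc (0 : ℤ) (2 * p)) = 2 * p + 1 := by rw [Int.card_Icc]; omega
  let Lv' (n : ℕ) : Finset ℤ := if h : n < k then Lv ⟨n, h⟩ else Icc 0 (2 * p)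
  let Le' (n : ℕ) : Finset ℤ := if h : n + 1 < k then
    Le ⟨s(⟨n, by omega⟩, ⟨n + 1, h⟩), by simp [pathGraph_adj]⟩ else Icc 0 (2 * p)
  have hLv' : ∀ n, 2 * p + 1 ≤ #(Lv' n) := fun n => by
    by_cases h : n < k <;> simp only [Lv', h, dite_true, dite_false, hLv, hpad, le_refl]
  have hLe' : ∀ n, 2 * p + 1 ≤ #(Le' n) := fun n => by
    by_cases h : n + 1 < k <;> simp only [Le', h, dite_true, dite_false, hLe, hpad, le_refl]
  obtain ⟨cv, ce, hcv, hce, hvv, hee, hve, hve'⟩ := exists_listPOneTotalLabelling_ray hp hLv' hLe'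
  refine ⟨fun v => cv v, fun e => ce (e : Sym2 (Fin k)).inf, ⟨?_, ?_, ?_⟩, fun v => ?_, ?_⟩
  · intro u v huv
    rcases pathGraph_adj.1 huv with h | h
    · show cv u ≠ cv v
      rw [← h]; exact (hvv u).symm
    · show cv u ≠ cv v
      rw [← h]; exact hvv v
  · rintro ⟨e, he⟩ ⟨f, hf⟩ hef ⟨v, hve, hvf⟩
    obtain ⟨i, hi, rfl⟩ := exists_eq_mk_of_mem_edgeSet_pathGraph he
    obtain ⟨j, hj, rfl⟩ := exists_eq_mk_of_mem_edgeSet_pathGraph hf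
    simp only [Sym2.inf_mk_fin_succ]
    have hij : i ≠ j := by rintro rfl; exact hef rfl
    simp only [Sym2.mem_iff, Fin.ext_iff] at hve hvf
    obtain rfl | rfl : j = i + 1 ∨ i = j + 1 := by omega
    exacts [(hee i).symm, hee j]
  · rintro v ⟨e, he⟩ hv
    obtain ⟨i, hi, rfl⟩ := exists_eq_mk_of_mem_edgeSet_pathGraph he
    simp only [Sym2.inf_mk_fin_succ]
    rcases Sym2.mem_iff.1 hv with rfl | rfl
    exacts [hve i, hve' i]
  · simpa only [Lv', v.isLt, dite_true] using hcv v
  · rintro ⟨e, he⟩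
    obtain ⟨i, hi, rfl⟩ := exists_eq_mk_of_mem_edgeSet_pathGraph he
    simpa only [Sym2.inf_mk_fin_succ, Le', hi, dite_true] using hce i

theorem not_listPOneTotalLabelable_two_of_subset_Icc {V : Type*} {G : SimpleGraph V} {u v w : V}
    (huv : G.Adj u v) (hvw : G.Adj v w) (huw : u ≠ w) {Lv : V → Finset ℤ}
    {Le : G.edgeSet → Finset ℤ} (hLv : ∀ x, Lv x ⊆ Icc 0 3) (hLe : ∀ e, Le e ⊆ Icc 0 3) :
    ¬ ListPOneTotalLabelable G 2 Lv Le := by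
  rintro ⟨cv, ce, ⟨hvv, hee, hve⟩, hcv, hce⟩
  let e : G.edgeSet := ⟨s(u, v), huv⟩
  let f : G.edgeSet := ⟨s(v, w), hvw⟩
  have hef : e ≠ f := fun h => by
    rcases Sym2.eq_iff.1 (congrArg Subtype.val h) with ⟨rfl, -⟩ | ⟨h, -⟩
    exacts [huv.ne rfl, huw h]
  have := hee e f hef ⟨v, Sym2.mem_mk_right _ _, Sym2.mem_mk_left _ _⟩
  have := hvv u v huv
  have := hvv v w hvw
  have := hve u e (Sym2.mem_mk_left _ _)
  have := hve v e (Sym2.mem_mk_right _ _)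
  have := hve v f (Sym2.mem_mk_left _ _)
  have := hve w f (Sym2.mem_mk_right _ _)
  have := mem_Icc.1 (hLv u (hcv u))
  have := mem_Icc.1 (hLv v (hcv v))
  have := mem_Icc.1 (hLv w (hcv w))
  have := mem_Icc.1 (hLe e (hce e))
  have := mem_Icc.1 (hLe f (hce f))
  simp only [le_abs, Nat.cast_ofNat] at *
  omega

theorem five_le_of_forall_listPOneTotalLabelable_two {V : Type*} {G : SimpleGraph V} {u v w : V}
    (huv : G.Adj u v) (hvw : G.Adj v w) (huw : u ≠ w) {m : ℕ}
    (hm : ∀ (Lv : V → Finset ℤ) (Le : G.edgeSet → Finset ℤ), (∀ x, #(Lv x) = m) →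
      (∀ e, #(Le e) = m) → ListPOneTotalLabelable G 2 Lv Le) : 5 ≤ m := by
  by_contra! hm5
  have hcard : #(Ico (0 : ℤ) m) = m := by simp
  have hsub : Ico (0 : ℤ) m ⊆ Icc 0 3 := fun x hx => by
    rw [mem_Ico] at hx; rw [mem_Icc]; omega
  exact not_listPOneTotalLabelable_two_of_subset_Icc huv hvw huw (fun _ => hsub) (fun _ => hsub)
    (hm _ _ (fun _ => hcard) (fun _ => hcard))

theorem pOneTotalChoosability_pathGraph_le {p : ℕ} (hp : 0 < p) (k : ℕ) :
    pOneTotalChoosability (pathGraph k) p ≤ 2 * p + 1 :=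
  Nat.sInf_le fun _ _ hLv hLe =>
    listPOneTotalLabelable_pathGraph hp (fun v => (hLv v).ge) (fun e => (hLe e).ge)

theorem five_le_pOneTotalChoosability_pathGraph_two {k : ℕ} (hk : 3 ≤ k) :
    5 ≤ pOneTotalChoosability (pathGraph k) 2 := by
  have hadj (i : ℕ) (h : i + 1 < k) : (pathGraph k).Adj ⟨i, by omega⟩ ⟨i + 1, h⟩ := by
    simp [pathGraph_adj]
  refine le_csInf ⟨5, fun _ _ hLv hLe => ?_⟩ fun m hm => ?_
  · exact listPOneTotalLabelable_pathGraph two_pos (fun v => (hLv v).ge) (fun e => (hLe e).ge)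
  · exact five_le_of_forall_listPOneTotalLabelable_two (hadj 0 (by omega)) (hadj 1 (by omega))
      (by simp) hm

/-- C_{2,1}^T(P_k) = 5 = 2·2 + 1 for all k ≥ 3. -/
theorem pOneTotalChoosability_pathGraph_two (k : ℕ) (hk : 3 ≤ k) :
    pOneTotalChoosability (SimpleGraph.pathGraph k) 2 = 5 ∧ (5 : ℕ) = 2 * 2 + 1 :=
  ⟨(pOneTotalChoosability_pathGraph_le two_pos k).antisymm
    (five_le_pOneTotalChoosability_pathGraph_two hk), rfl⟩
end

section
/- Let T be a finite tree (a connected acyclic simple graph) with maximum degree Δ. Then for every integer d ≥ 1 and every integer s ≥ 1, χ_l^{d,s}(T) ≤ 2d − 1 + sΔ. -/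
open SimpleGraph

/-!
Root the tree at `r` and label it one depth at a time, all children of a vertex `u` together.
A pair at distance two in a tree is either a sibling pair or a grandchild–grandparent pair, so a
child of `u` only has to stay `d` away from `u`, `s` away from the parent of `u` (if `u ≠ r`) and
`s` away from its siblings. The first two constraints exclude at most `2d - 1 + 2s - 1` values of
its list, leaving `s(Δ - 2) + 1` (`sΔ` if `u = r`), and `u` has at most `Δ - 1` children (`Δ` if
`u = r`); lists of size `s(m - 1) + 1` always admit an `s`-separated choice for `m` vertices.
-/

open Finset

lemma card_sub_mul_le_card_filter_le_abs_sub (K B : Finset ℤ) (q : ℕ) :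
    #K - (2 * q - 1) * #B ≤ #{x ∈ K | ∀ b ∈ B, (q : ℤ) ≤ |x - b|} := by
  have hwindow : ∀ b ∈ B, #(Icc (b - q + 1) (b + q - 1)) ≤ 2 * q - 1 := by
    intro b _
    rw [Int.card_Icc]
    omega
  have hcover : K ⊆ {x ∈ K | ∀ b ∈ B, (q : ℤ) ≤ |x - b|} ∪
      B.biUnion fun b => Icc (b - q + 1) (b + q - 1) := by
    intro x hx
    by_cases h : ∀ b ∈ B, (q : ℤ) ≤ |x - b|
    · exact mem_union_left _ (mem_filter.2 ⟨hx, h⟩)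
    · obtain ⟨b, hb, hxb⟩ := by simpa only [not_forall, not_le, exists_prop] using h
      refine mem_union_right _ (mem_biUnion.2 ⟨b, hb, mem_Icc.2 ⟨?_, ?_⟩⟩) <;>
        cases abs_lt.1 hxb <;> omega
  have := card_le_card hcover
  have := card_union_le {x ∈ K | ∀ b ∈ B, (q : ℤ) ≤ |x - b|}
    (B.biUnion fun b => Icc (b - q + 1) (b + q - 1))
  have := card_biUnion_le_card_mul B _ _ hwindow
  rw [mul_comm] at this
  omega

/-- Give the largest value occurring in any list to a vertex whose list contains it, and remove
from the other lists the `s` values just below it (there are no larger ones). -/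
lemma exists_pairwise_le_abs_sub {α : Type*} (s : ℕ) (A : Finset α) (K : α → Finset ℤ)
    (hK : ∀ i ∈ A, s * (#A - 1) + 1 ≤ #(K i)) :
    ∃ g : α → ℤ, (∀ i ∈ A, g i ∈ K i) ∧ (A : Set α).Pairwise fun i j => (s : ℤ) ≤ |g i - g j| := by
  classical
  induction A using Finset.strongInduction generalizing K with
  | H A ih =>
  rcases A.eq_empty_or_nonempty with rfl | hA
  · exact ⟨0, by simp, by simp⟩
  have hU : (A.biUnion K).Nonempty := by
    obtain ⟨i, hi⟩ := hA
    obtain ⟨x, hx⟩ := card_pos.1 (by have := hK i hi; omega : 0 < #(K i))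
    exact ⟨x, mem_biUnion.2 ⟨i, hi, hx⟩⟩
  set c := (A.biUnion K).max' hU
  obtain ⟨i₀, hi₀, hc⟩ := mem_biUnion.1 ((A.biUnion K).max'_mem hU)
  have hle_c : ∀ j ∈ A, ∀ x ∈ K j, x ≤ c := fun j hj x hx =>
    (A.biUnion K).le_max' x (mem_biUnion.2 ⟨j, hj, hx⟩)
  have hcard_top : ∀ j ∈ A, #{x ∈ K j | ¬ x + s ≤ c} ≤ s := fun j hj => by
    have hsub : {x ∈ K j | ¬ x + s ≤ c} ⊆ Ioc (c - s) c := fun x hx => by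
      rw [mem_filter] at hx
      have := hle_c j hj x hx.1
      rw [mem_Ioc]
      omega
    simpa using card_le_card hsub
  obtain ⟨g, hgK, hg⟩ := ih (A.erase i₀) (erase_ssubset hi₀) (fun j => {x ∈ K j | x + s ≤ c})
    (fun j hj => by
      obtain ⟨hji₀, hjA⟩ := mem_erase.1 hj
      obtain ⟨m, hm⟩ : ∃ m, #A = m + 2 :=
        ⟨#A - 2, by have := one_lt_card.2 ⟨j, hjA, i₀, hi₀, hji₀⟩; omega⟩
      have := card_filter_add_card_filter_not (s := K j) (fun x => x + s ≤ c)
      have := hK j hjA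
      have := hcard_top j hjA
      rw [card_erase_of_mem hi₀, hm, show m + 2 - 1 - 1 = m by omega] at *
      rw [show m + 2 - 1 = m + 1 by omega, Nat.mul_succ] at *
      omega)
  have hgc : ∀ j ∈ A.erase i₀, (s : ℤ) ≤ |c - g j| := fun j hj => by
    have := (mem_filter.1 (hgK j hj)).2
    rw [abs_of_nonneg (by omega)]
    omega
  have hupdate : ∀ j ∈ A.erase i₀, Function.update g i₀ c j = g j := fun j hj =>
    Function.update_of_ne (ne_of_mem_erase hj) _ _
  refine ⟨Function.update g i₀ c, fun i hi => ?_, ?_⟩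
  · by_cases hii₀ : i = i₀
    · subst hii₀
      simpa using hc
    · rw [Function.update_of_ne hii₀]
      exact (mem_filter.1 (hgK i (mem_erase.2 ⟨hii₀, hi⟩))).1
  · rw [← insert_erase hi₀, coe_insert, Set.pairwise_insert]
    refine ⟨fun i hi j hj hij => ?_, fun j hj _ => ?_⟩
    · simp only [hupdate i hi, hupdate j hj]
      exact hg hi hj hij
    · simp only [Function.update_self, hupdate j hj, abs_sub_comm (g j)]
      exact ⟨hgc j hj, hgc j hj⟩

section

variable {V : Type*}

def IsLpqLabellingOn (H : SimpleGraph V) (p q : ℕ) (S : Set V) (f : V → ℤ) : Prop :=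
  (∀ u ∈ S, ∀ v ∈ S, H.Adj u v → (p : ℤ) ≤ |f u - f v|) ∧
  (∀ u ∈ S, ∀ v ∈ S, H.dist u v = 2 → (q : ℤ) ≤ |f u - f v|)

lemma IsLpqLabellingOn.isLpqLabelling {H : SimpleGraph V} {p q : ℕ} {S : Set V} {f : V → ℤ}
    (h : IsLpqLabellingOn H p q S f) (hS : ∀ v, v ∈ S) : IsLpqLabelling H p q f :=
  ⟨fun u v => h.1 u (hS u) v (hS v), fun u v => h.2 u (hS u) v (hS v)⟩

end

namespace SimpleGraph

variable {V : Type*} {G : SimpleGraph V} {r u v w : V}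

lemma exists_adj_adj_of_dist_eq_two (h : G.dist u v = 2) : ∃ w, G.Adj u w ∧ G.Adj w v := by
  have hedist : G.edist u v = 2 := by
    rw [← (Reachable.of_dist_ne_zero (by omega)).coe_dist_eq_edist, h]
    rfl
  obtain ⟨-, -, w, hw⟩ := edist_eq_two_iff.1 hedist
  obtain ⟨huw, hvw⟩ := (G.mem_commonNeighbors).1 hw
  exact ⟨w, huw, hvw.symm⟩

lemma exists_adj_dist_add_one_eq (h : G.dist r v ≠ 0) :
    ∃ u, G.Adj u v ∧ G.dist r u + 1 = G.dist r v := by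
  obtain ⟨p, hp⟩ := exists_walk_of_dist_ne_zero h
  have hnil : ¬p.Nil := fun hnil => h (by rw [← hp, hnil.length_eq_zero])
  refine ⟨p.penultimate, p.adj_penultimate hnil, le_antisymm ?_ ?_⟩
  · have := dist_le p.dropLast
    rw [Walk.length_dropLast] at this
    omega
  · have := (p.adj_penultimate hnil).reachable.dist_triangle_right r
    rwa [dist_eq_one_iff_adj.2 (p.adj_penultimate hnil)] at this

lemma IsTree.eq_of_adj_of_dist_add_one_eq (hG : G.IsTree) (hu : G.Adj u v) (hw : G.Adj w v)
    (hdu : G.dist r u + 1 = G.dist r v) (hdw : G.dist r w + 1 = G.dist r v) : u = w := by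
  obtain ⟨p, -, hp⟩ := (hG.connected r u).exists_path_of_dist
  obtain ⟨q, -, hq⟩ := (hG.connected r w).exists_path_of_dist
  have hp' : (p.concat hu).IsPath := Walk.isPath_of_length_eq_dist _ (by simp [hp, hdu])
  have hq' : (q.concat hw).IsPath := Walk.isPath_of_length_eq_dist _ (by simp [hq, hdw])
  simpa using congrArg Walk.penultimate ((hG.existsUnique_path r v).unique hp' hq')

lemma IsTree.isLpqLabellingOn_ball_succ (hG : G.IsTree) {p q n : ℕ} {f : V → ℤ}
    (hball : IsLpqLabellingOn G p q {v | G.dist r v ≤ n} f)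
    (hparent : ∀ u v, G.Adj u v → G.dist r u = n → G.dist r v = n + 1 → (p : ℤ) ≤ |f v - f u|)
    (hgrand : ∀ u w v, G.Adj u w → G.Adj w v → G.dist r u + 1 = n → G.dist r w = n →
      G.dist r v = n + 1 → (q : ℤ) ≤ |f v - f u|)
    (hsibling : ∀ w u v, G.Adj w u → G.Adj w v → u ≠ v → G.dist r w = n →
      G.dist r u = n + 1 → G.dist r v = n + 1 → (q : ℤ) ≤ |f u - f v|) :
    IsLpqLabellingOn G p q {v | G.dist r v ≤ n + 1} f := by
  have hadj : ∀ u v, G.Adj u v → G.dist r u + 1 = G.dist r v → G.dist r v ≤ n + 1 →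
      (p : ℤ) ≤ |f v - f u| := fun u v huv hd hv => by
    by_cases hvn : G.dist r v ≤ n
    · exact hball.1 v hvn u (show G.dist r u ≤ n by omega) huv.symm
    · exact hparent u v huv (by omega) (by omega)
  have hpath : ∀ u w v, G.Adj u w → G.Adj w v → G.dist r u + 1 = G.dist r w →
      G.dist r w + 1 = G.dist r v → G.dist r v ≤ n + 1 → G.dist u v = 2 →
      (q : ℤ) ≤ |f v - f u| := fun u w v huw hwv h1 h2 hv huv => by
    by_cases hvn : G.dist r v ≤ n
    · exact hball.2 v hvn u (show G.dist r u ≤ n by omega) (dist_comm.trans huv)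
    · exact hgrand u w v huw hwv (by omega) (by omega) (by omega)
  refine ⟨fun u (hu : G.dist r u ≤ n + 1) v (hv : G.dist r v ≤ n + 1) huv => ?_,
    fun u (hu : G.dist r u ≤ n + 1) v (hv : G.dist r v ≤ n + 1) huv => ?_⟩
  · rcases hG.dist_eq_dist_add_one_of_adj r huv with h | h
    · exact hadj v u huv.symm h.symm hu
    · rw [abs_sub_comm]
      exact hadj u v huv h.symm hv
  obtain ⟨w, huw, hwv⟩ := exists_adj_adj_of_dist_eq_two huv
  have hne : u ≠ v := by
    rintro rfl
    simp at huv
  rcases hG.dist_eq_dist_add_one_of_adj r huw with h1 | h1 <;>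
    rcases hG.dist_eq_dist_add_one_of_adj r hwv with h2 | h2
  · exact hpath v w u hwv.symm huw.symm h2.symm h1.symm hu (dist_comm.trans huv)
  · by_cases hun : G.dist r u ≤ n
    · exact hball.2 u hun v (show G.dist r v ≤ n by omega) huv
    · exact hsibling w u v huw.symm hwv hne (by omega) (by omega) (by omega)
  · exact absurd (hG.eq_of_adj_of_dist_add_one_eq huw hwv.symm h1.symm h2.symm) hne
  · rw [abs_sub_comm]
    exact hpath u w v huw hwv h1.symm h2.symm hv huv

section Finite

variable [Fintype V] [DecidableRel G.Adj] {L : V → Finset ℤ} {d s : ℕ}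

variable (G) in
noncomputable def childFinset (r u : V) : Finset V :=
  {v | G.Adj u v ∧ G.dist r v = G.dist r u + 1}

variable (G) in
noncomputable def parentFinset (r u : V) : Finset V :=
  {w | G.Adj w u ∧ G.dist r w + 1 = G.dist r u}

lemma mem_childFinset {v : V} :
    v ∈ G.childFinset r u ↔ G.Adj u v ∧ G.dist r v = G.dist r u + 1 := by
  simp [childFinset]

lemma mem_parentFinset {w : V} :
    w ∈ G.parentFinset r u ↔ G.Adj w u ∧ G.dist r w + 1 = G.dist r u := by
  simp [parentFinset]

lemma card_childFinset_add_card_parentFinset_le :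
    #(G.childFinset r u) + #(G.parentFinset r u) ≤ G.maxDegree := by
  classical
  have hdisj : Disjoint (G.childFinset r u) (G.parentFinset r u) :=
    Finset.disjoint_left.2 fun v hc hp => by
      rw [mem_childFinset] at hc
      rw [mem_parentFinset] at hp
      omega
  have hsub : G.childFinset r u ∪ G.parentFinset r u ⊆ G.neighborFinset u := fun v hv => by
    rw [Finset.mem_union, mem_childFinset, mem_parentFinset] at hv
    rw [mem_neighborFinset]
    rcases hv with hv | hv
    exacts [hv.1, hv.1.symm]
  calc #(G.childFinset r u) + #(G.parentFinset r u)
      = #(G.childFinset r u ∪ G.parentFinset r u) := (card_union_of_disjoint hdisj).symm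
    _ ≤ #(G.neighborFinset u) := card_le_card hsub
    _ = G.degree u := card_neighborFinset_eq_degree G u
    _ ≤ G.maxDegree := G.degree_le_maxDegree u

lemma IsTree.card_parentFinset_le_one (hG : G.IsTree) : #(G.parentFinset r u) ≤ 1 :=
  card_le_one.2 fun w hw w' hw' => by
    rw [mem_parentFinset] at hw hw'
    exact hG.eq_of_adj_of_dist_add_one_eq hw.1 hw'.1 hw.2 hw'.2

lemma IsTree.exists_childFinset_labelling (hG : G.IsTree)
    (hL : ∀ v, #(L v) = 2 * d - 1 + s * G.maxDegree) (hs : 1 ≤ s) (f : V → ℤ) (u : V) :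
    ∃ g : V → ℤ, (∀ v ∈ G.childFinset r u, g v ∈ L v ∧ (d : ℤ) ≤ |g v - f u| ∧
        ∀ w ∈ G.parentFinset r u, (s : ℤ) ≤ |g v - f w|) ∧
      (G.childFinset r u : Set V).Pairwise fun v v' => (s : ℤ) ≤ |g v - g v'| := by
  let K : V → Finset ℤ := fun v =>
    {x ∈ {x ∈ L v | ∀ b ∈ ({f u} : Finset ℤ), (d : ℤ) ≤ |x - b|} |
      ∀ b ∈ (G.parentFinset r u).image f, (s : ℤ) ≤ |x - b|}
  obtain ⟨g, hgK, hg⟩ := exists_pairwise_le_abs_sub s (G.childFinset r u) K fun v hv => by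
    have hK := card_sub_mul_le_card_filter_le_abs_sub
      {x ∈ L v | ∀ b ∈ ({f u} : Finset ℤ), (d : ℤ) ≤ |x - b|} ((G.parentFinset r u).image f) s
    have hLv := card_sub_mul_le_card_filter_le_abs_sub (L v) {f u} d
    have himage := card_image_le (s := G.parentFinset r u) (f := f)
    have hdeg := card_childFinset_add_card_parentFinset_le (G := G) (r := r) (u := u)
    have hpar := hG.card_parentFinset_le_one (r := r) (u := u)
    have hchild : 1 ≤ #(G.childFinset r u) := card_pos.2 ⟨v, hv⟩
    rw [hL, card_singleton, mul_one, Nat.add_sub_cancel_left] at hLv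
    obtain ⟨c, hc⟩ : ∃ c, #(G.childFinset r u) = c + 1 := ⟨_, (Nat.sub_add_cancel hchild).symm⟩
    have hroom : s * c + 1 + (2 * s - 1) * #(G.parentFinset r u) ≤ s * G.maxDegree :=
      calc s * c + 1 + (2 * s - 1) * #(G.parentFinset r u)
          ≤ s * (c + 1 + #(G.parentFinset r u)) := by
            interval_cases #(G.parentFinset r u) <;> simp only [Nat.mul_succ] <;> omega
        _ ≤ s * G.maxDegree := Nat.mul_le_mul_left s (hc ▸ hdeg)
    have := Nat.mul_le_mul_left (2 * s - 1) himage
    rw [hc, Nat.add_sub_cancel]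
    simp only [K]
    omega
  refine ⟨g, fun v hv => ?_, hg⟩
  have := hgK v hv
  simp only [K, mem_filter, mem_singleton, forall_eq, mem_image, forall_exists_index, and_imp,
    forall_apply_eq_imp_iff₂] at this
  exact ⟨this.1.1, this.1.2, this.2⟩

lemma IsTree.exists_lpqLabellingOn_ball_succ (hG : G.IsTree)
    (hL : ∀ v, #(L v) = 2 * d - 1 + s * G.maxDegree) (hs : 1 ≤ s) {n : ℕ} {f : V → ℤ}
    (hfL : ∀ v, G.dist r v ≤ n → f v ∈ L v)
    (hf : IsLpqLabellingOn G d s {v | G.dist r v ≤ n} f) :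
    ∃ f' : V → ℤ, (∀ v, G.dist r v ≤ n + 1 → f' v ∈ L v) ∧
      IsLpqLabellingOn G d s {v | G.dist r v ≤ n + 1} f' := by
  classical
  choose g hg hgsep using hG.exists_childFinset_labelling (r := r) hL hs f
  choose! parent hparent using fun v (hv : G.dist r v ≠ 0) => exists_adj_dist_add_one_eq hv
  set f' : V → ℤ := fun v => if G.dist r v = n + 1 then g (parent v) v else f v
  have hold : ∀ v, G.dist r v ≤ n → f' v = f v := fun v hv => if_neg (by omega)
  have hnew : ∀ u v, G.Adj u v → G.dist r u = n → G.dist r v = n + 1 →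
      f' v = g u v ∧ v ∈ G.childFinset r u := fun u v huv hu hv => by
    obtain ⟨hpv, hdpv⟩ := hparent v (by omega)
    obtain rfl : parent v = u := hG.eq_of_adj_of_dist_add_one_eq hpv huv hdpv (by omega)
    exact ⟨if_pos hv, mem_childFinset.2 ⟨hpv, by omega⟩⟩
  refine ⟨f', fun v hv => ?_, hG.isLpqLabellingOn_ball_succ ?_ ?_ ?_ ?_⟩
  · by_cases hvn : G.dist r v ≤ n
    · rw [hold v hvn]
      exact hfL v hvn
    · obtain ⟨hpv, hdpv⟩ := hparent v (by omega)
      obtain ⟨hf'v, hchild⟩ := hnew _ v hpv (by omega) (by omega)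
      exact hf'v ▸ (hg _ v hchild).1
  · exact ⟨fun u hu v hv huv => by rw [hold u hu, hold v hv]; exact hf.1 u hu v hv huv,
      fun u hu v hv huv => by rw [hold u hu, hold v hv]; exact hf.2 u hu v hv huv⟩
  · intro u v huv hu hv
    obtain ⟨hf'v, hchild⟩ := hnew u v huv hu hv
    rw [hf'v, hold u hu.le]
    exact (hg u v hchild).2.1
  · intro u w v huw hwv hu hw hv
    obtain ⟨hf'v, hchild⟩ := hnew w v hwv hw hv
    rw [hf'v, hold u (by omega)]
    exact (hg w v hchild).2.2 u (mem_parentFinset.2 ⟨huw, by omega⟩)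
  · intro w u v hwu hwv hne hw hu hv
    obtain ⟨hf'u, hchildu⟩ := hnew w u hwu hw hu
    obtain ⟨hf'v, hchildv⟩ := hnew w v hwv hw hv
    rw [hf'u, hf'v]
    exact hgsep w hchildu hchildv hne

lemma IsTree.exists_lpqLabellingOn_ball (hG : G.IsTree)
    (hL : ∀ v, #(L v) = 2 * d - 1 + s * G.maxDegree) (hd : 1 ≤ d) (hs : 1 ≤ s) (n : ℕ) :
    ∃ f : V → ℤ, (∀ v, G.dist r v ≤ n → f v ∈ L v) ∧
      IsLpqLabellingOn G d s {v | G.dist r v ≤ n} f := by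
  induction n with
  | zero =>
    obtain ⟨x, hx⟩ := card_pos.1 (by rw [hL]; omega : 0 < #(L r))
    have hroot : ∀ v, G.dist r v ≤ 0 → v = r := fun v hv =>
      ((hG.connected.dist_eq_zero_iff).1 (by omega)).symm
    refine ⟨fun _ => x, fun v hv => hroot v hv ▸ hx, fun u hu v hv huv => ?_,
      fun u hu v hv huv => ?_⟩
    · rw [hroot u hu, hroot v hv] at huv
      exact (G.irrefl huv).elim
    · rw [hroot u hu, hroot v hv, dist_self] at huv
      omega
  | succ n ih =>
    obtain ⟨f, hfL, hf⟩ := ih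
    exact hG.exists_lpqLabellingOn_ball_succ hL hs hfL hf

end Finite

end SimpleGraph

/-- for a tree T with maximum degree Δ and d, s ≥ 1,
χ_l^{d,s}(T) ≤ 2d − 1 + sΔ. -/
theorem listLpqChromatic_tree_le {V : Type*} [Fintype V] (T : SimpleGraph V)
    [DecidableRel T.Adj] (hT : T.IsTree) (d s : ℕ) (hd : 1 ≤ d) (hs : 1 ≤ s) :
    listLpqChromatic T d s ≤ 2 * d - 1 + s * T.maxDegree := by
  obtain ⟨r⟩ := hT.connected.nonempty
  refine Nat.sInf_le fun L hL => ?_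
  have hball : ∀ v, T.dist r v ≤ univ.sup (T.dist r) := fun v => le_sup (mem_univ v)
  obtain ⟨f, hfL, hf⟩ := hT.exists_lpqLabellingOn_ball (r := r) hL hd hs (univ.sup (T.dist r))
  exact ⟨f, hf.isLpqLabelling hball, fun v => hfL v (hball v)⟩
end
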